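/- Define, for ζ ∈ (0,1), H(ζ) := 2·(ζ²/√(1−ζ²))·∫_ζ^1 √(t^{−2} − 1) dt, and let ζ₀ ∈ (0, √(2−√2)) be the unique zero of g₀(ζ) := ∫_ζ^1 √(t^{−2} − 1) dt − (1−ζ²)^{3/2}/(2−ζ²) in that interval. Then H is strictly increasing on (0, ζ₀) and strictly decreasing on (ζ₀, 1); in particular ζ₀ is the unique global maximizer of H on (0,1). -/

import Mathlib

/-- The leading-order criticality function
`g₀(ζ) = ∫_ζ^1 √(t^{−2}−1) dt − (1−ζ²)^{3/2}/(2−ζ²)`. -/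
noncomputable def g0 (ζ : ℝ) : ℝ :=
  (∫ t in ζ..(1 : ℝ), Real.sqrt (1 / t ^ 2 - 1)) - (1 - ζ ^ 2) ^ ((3 : ℝ) / 2) / (2 - ζ ^ 2)

/-- The leading-order exponential rate `H(ζ) = 2 (ζ²/√(1−ζ²)) ∫_ζ^1 √(t^{−2}−1) dt`. -/
noncomputable def Hrate (ζ : ℝ) : ℝ :=
  2 * (ζ ^ 2 / Real.sqrt (1 - ζ ^ 2)) * ∫ t in ζ..(1 : ℝ), Real.sqrt (1 / t ^ 2 - 1)

/-! `H' = 2 (ζ²/√(1−ζ²))' · g₀` with a positive first factor, so the shape of `H` is the sign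
pattern of `g₀`. Since `g₀' = −2√(1−ζ²)(ζ⁴−4ζ²+2)/(ζ(2−ζ²)²)` and `ζ⁴−4ζ²+2` changes sign on
`(0,1)` only at `ζ₁ = √(2−√2)`, `g₀` decreases on `(0, ζ₁]` and increases on `[ζ₁, 1]` up to
`g₀(1) = 0`; so `g₀` is positive before its zero `ζ₀ < ζ₁` and negative after it. -/

open Real Set

lemma strictMonoOn_Ioc_and_strictAntiOn_Ico_of_hasDerivAt {f f' : ℝ → ℝ} {a m b : ℝ}
    (hm : m ∈ Ioo a b) (hf : ∀ x ∈ Ioo a b, HasDerivAt f (f' x) x)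
    (hpos : ∀ x ∈ Ioo a m, 0 < f' x) (hneg : ∀ x ∈ Ioo m b, f' x < 0) :
    StrictMonoOn f (Ioc a m) ∧ StrictAntiOn f (Ico m b) := by
  have hcont : ContinuousOn f (Ioo a b) := fun x hx ↦ (hf x hx).continuousAt.continuousWithinAt
  constructor
  · refine strictMonoOn_of_hasDerivWithinAt_pos (convex_Ioc a m)
      (hcont.mono (Ioc_subset_Ioo_right hm.2)) (fun x hx ↦ ?_) (by simpa using hpos)
    rw [interior_Ioc] at hx
    exact (hf x ⟨hx.1, hx.2.trans hm.2⟩).hasDerivWithinAt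
  · refine strictAntiOn_of_hasDerivWithinAt_neg (convex_Ico m b)
      (hcont.mono (Ico_subset_Ioo_left hm.1)) (fun x hx ↦ ?_) (by simpa using hneg)
    rw [interior_Ico] at hx
    exact (hf x ⟨hm.1.trans hx.1, hx.2⟩).hasDerivWithinAt

lemma rpow_three_halves_eq_sqrt_pow (a : ℝ) : a ^ ((3 : ℝ) / 2) = √a ^ 3 := by
  rcases le_or_gt 0 a with ha | ha
  · rw [sqrt_eq_rpow, ← rpow_natCast, ← rpow_mul ha]
    norm_num
  · rw [rpow_def_of_neg ha, sqrt_eq_zero_of_nonpos ha.le,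
      show (3 : ℝ) / 2 * π = π / 2 + π by ring, cos_add_pi, cos_pi_div_two]
    simp

lemma sqrt_one_div_sq_sub_one {x : ℝ} (hx : 0 < x) : √(1 / x ^ 2 - 1) = √(1 - x ^ 2) / x := by
  rw [show 1 / x ^ 2 - 1 = (1 - x ^ 2) / x ^ 2 by field_simp, sqrt_div' _ (sq_nonneg x),
    sqrt_sq hx.le]

lemma hasDerivAt_sqrt_one_sub_sq {x : ℝ} (hx : 1 - x ^ 2 ≠ 0) :
    HasDerivAt (fun z ↦ √(1 - z ^ 2)) (-x / √(1 - x ^ 2)) x := by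
  convert ((hasDerivAt_pow 2 x).const_sub 1).sqrt hx using 1
  field_simp
  ring

noncomputable def rateIntegral (x : ℝ) : ℝ := ∫ t in x..1, √(1 / t ^ 2 - 1)

lemma hasDerivAt_rateIntegral {x : ℝ} (hx : 0 < x) :
    HasDerivAt rateIntegral (-(√(1 - x ^ 2) / x)) x := by
  have hcont : ContinuousOn (fun t : ℝ ↦ √(1 / t ^ 2 - 1)) (Ioi 0) :=
    ((continuousOn_const.div (by fun_prop) fun t ht ↦ pow_ne_zero 2 (ne_of_gt ht)).sub
      continuousOn_const).sqrt
  rw [← sqrt_one_div_sq_sub_one hx]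
  refine intervalIntegral.integral_hasDerivAt_left ?_
    (by fun_prop : Measurable _).aestronglyMeasurable.stronglyMeasurableAtFilter
    (hcont.continuousAt (Ioi_mem_nhds hx))
  refine (hcont.mono fun t ht ↦ ?_).intervalIntegrable
  rcases mem_uIcc.1 ht with h | h <;> simp only [mem_Ioi] <;> linarith [h.1]

lemma g0_eq_rateIntegral_sub : g0 = fun x ↦ rateIntegral x - √(1 - x ^ 2) ^ 3 / (2 - x ^ 2) := by
  funext x
  rw [g0, rpow_three_halves_eq_sqrt_pow, rateIntegral]

lemma hasDerivAt_g0 {x : ℝ} (hx : 0 < x) (hx1 : x < 1) :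
    HasDerivAt g0 (-2 * √(1 - x ^ 2) * (x ^ 4 - 4 * x ^ 2 + 2) / (x * (2 - x ^ 2) ^ 2)) x := by
  have h1 : 0 < 1 - x ^ 2 := by nlinarith
  have h2 : 2 - x ^ 2 ≠ 0 := by nlinarith
  have hs2 : √(1 - x ^ 2) ^ 2 = 1 - x ^ 2 := sq_sqrt h1.le
  rw [g0_eq_rateIntegral_sub]
  refine ((hasDerivAt_rateIntegral hx).sub (((hasDerivAt_sqrt_one_sub_sq h1.ne').pow 3).div
    ((hasDerivAt_pow 2 x).const_sub 2) h2)).congr_deriv ?_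
  have hs := sqrt_pos.2 h1
  simp only [Pi.pow_apply]
  field_simp
  linear_combination -2 * x ^ 2 * √(1 - x ^ 2) ^ 2 * hs2

lemma hasDerivAt_sq_div_sqrt_one_sub_sq {x : ℝ} (hx : 0 < 1 - x ^ 2) :
    HasDerivAt (fun z ↦ z ^ 2 / √(1 - z ^ 2)) (x * (2 - x ^ 2) / √(1 - x ^ 2) ^ 3) x := by
  have hs2 : √(1 - x ^ 2) ^ 2 = 1 - x ^ 2 := sq_sqrt hx.le
  have hs := sqrt_pos.2 hx
  refine ((hasDerivAt_pow 2 x).div (hasDerivAt_sqrt_one_sub_sq hx.ne') hs.ne').congr_deriv ?_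
  field_simp
  linear_combination 2 * x * hs2

lemma hasDerivAt_Hrate {x : ℝ} (hx : 0 < x) (hx1 : x < 1) :
    HasDerivAt Hrate (2 * (x * (2 - x ^ 2) / √(1 - x ^ 2) ^ 3) * g0 x) x := by
  have h1 : 0 < 1 - x ^ 2 := by nlinarith
  have h2 : 2 - x ^ 2 ≠ 0 := by nlinarith
  refine (((hasDerivAt_sq_div_sqrt_one_sub_sq h1).const_mul 2).mul
    (hasDerivAt_rateIntegral hx)).congr_deriv ?_
  have hs := sqrt_pos.2 h1
  rw [g0_eq_rateIntegral_sub]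
  field_simp
  ring

lemma g0_one : g0 1 = 0 := by simp [g0]

lemma continuousOn_g0 : ContinuousOn g0 (Ioc 0 1) := by
  rw [g0_eq_rateIntegral_sub]
  refine ContinuousOn.sub
    (fun x hx ↦ (hasDerivAt_rateIntegral hx.1).continuousAt.continuousWithinAt)
    ((by fun_prop : Continuous fun x : ℝ ↦ √(1 - x ^ 2) ^ 3).continuousOn.div (by fun_prop)
      fun x hx ↦ ?_)
  nlinarith [hx.1, hx.2]

lemma sqrt_two_sub_sqrt_two_mem_Ioo : √(2 - √2) ∈ Ioo 0 1 := by
  have h1 : 1 < √2 := by rw [lt_sqrt zero_le_one]; norm_num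
  have h2 : √2 < 2 := by rw [sqrt_lt' two_pos]; norm_num
  exact ⟨sqrt_pos.2 (by linarith), (sqrt_lt' one_pos).2 (by linarith)⟩

lemma quartic_eq_mul (x : ℝ) : x ^ 4 - 4 * x ^ 2 + 2 = (x ^ 2 - (2 - √2)) * (x ^ 2 - (2 + √2)) := by
  linear_combination (sq_sqrt zero_le_two : √2 ^ 2 = 2)

lemma g0_strictAntiOn : StrictAntiOn g0 (Ioc 0 (√(2 - √2))) := by
  have hζ₁ := sqrt_two_sub_sqrt_two_mem_Ioo
  refine strictAntiOn_of_hasDerivWithinAt_neg (convex_Ioc _ _)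
    (f' := fun x ↦ -2 * √(1 - x ^ 2) * (x ^ 4 - 4 * x ^ 2 + 2) / (x * (2 - x ^ 2) ^ 2))
    (continuousOn_g0.mono (Ioc_subset_Ioc_right hζ₁.2.le)) (fun x hx ↦ ?_) fun x hx ↦ ?_
  all_goals rw [interior_Ioc] at hx
  · exact (hasDerivAt_g0 hx.1 (hx.2.trans hζ₁.2)).hasDerivWithinAt
  · have hx2 : x ^ 2 < 2 - √2 := (lt_sqrt hx.1.le).1 hx.2
    have hq : 0 < x ^ 4 - 4 * x ^ 2 + 2 := by
      rw [quartic_eq_mul]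
      exact mul_pos_of_neg_of_neg (by linarith) (by linarith [sqrt_nonneg 2])
    have hs : 0 < √(1 - x ^ 2) := sqrt_pos.2 (by nlinarith [hx.1, hx.2.trans hζ₁.2])
    have h2 : 0 < 2 - x ^ 2 := by nlinarith [sqrt_nonneg 2]
    refine div_neg_of_neg_of_pos ?_ (by have := hx.1; positivity)
    nlinarith [mul_pos hs hq]

lemma g0_strictMonoOn : StrictMonoOn g0 (Icc (√(2 - √2)) 1) := by
  have hζ₁ := sqrt_two_sub_sqrt_two_mem_Ioo
  refine strictMonoOn_of_hasDerivWithinAt_pos (convex_Icc _ _)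
    (f' := fun x ↦ -2 * √(1 - x ^ 2) * (x ^ 4 - 4 * x ^ 2 + 2) / (x * (2 - x ^ 2) ^ 2))
    (continuousOn_g0.mono (Icc_subset_Ioc_iff hζ₁.2.le |>.2 ⟨hζ₁.1, le_rfl⟩)) (fun x hx ↦ ?_)
    fun x hx ↦ ?_
  all_goals rw [interior_Icc] at hx
  · exact (hasDerivAt_g0 (hζ₁.1.trans hx.1) hx.2).hasDerivWithinAt
  · have hx0 : 0 < x := hζ₁.1.trans hx.1
    have hx2 : 2 - √2 < x ^ 2 := (sqrt_lt' hx0).1 hx.1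
    have hq : x ^ 4 - 4 * x ^ 2 + 2 < 0 := by
      rw [quartic_eq_mul]
      exact mul_neg_of_pos_of_neg (by linarith) (by nlinarith [sqrt_nonneg 2, hx.2])
    have hs : 0 < √(1 - x ^ 2) := sqrt_pos.2 (by nlinarith [hx.2])
    have h2 : 0 < 2 - x ^ 2 := by nlinarith [hx.2]
    refine div_pos ?_ (by positivity)
    nlinarith [mul_pos hs (neg_pos.2 hq)]

lemma g0_pos_of_lt {ζ₀ x : ℝ} (hζ₀ : ζ₀ ≤ √(2 - √2)) (hg : g0 ζ₀ = 0) (hx : x ∈ Ioo 0 ζ₀) :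
    0 < g0 x :=
  hg ▸ g0_strictAntiOn ⟨hx.1, hx.2.le.trans hζ₀⟩ ⟨hx.1.trans hx.2, hζ₀⟩ hx.2

lemma g0_neg_of_gt {ζ₀ x : ℝ} (hζ₀ : ζ₀ ∈ Ioo 0 (√(2 - √2))) (hg : g0 ζ₀ = 0)
    (hx : x ∈ Ioo ζ₀ 1) : g0 x < 0 := by
  rcases le_or_gt x (√(2 - √2)) with h | h
  · exact hg ▸ g0_strictAntiOn ⟨hζ₀.1, hζ₀.2.le⟩ ⟨hζ₀.1.trans hx.1, h⟩ hx.1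
  · exact g0_one ▸ g0_strictMonoOn ⟨h.le, hx.2.le⟩ ⟨sqrt_two_sub_sqrt_two_mem_Ioo.2.le, le_rfl⟩ hx.2

/-- If `ζ₀` is the unique zero of `g₀` in `(0, √(2−√2))`, then `H` is strictly
increasing on `(0, ζ₀)` and strictly decreasing on `(ζ₀, 1)`; in particular `ζ₀` is the
unique global maximizer of `H` on `(0,1)`. -/
theorem stmt12 :
    ∀ ζ₀ ∈ Set.Ioo (0 : ℝ) (Real.sqrt (2 - Real.sqrt 2)), g0 ζ₀ = 0 →
      StrictMonoOn Hrate (Set.Ioo (0 : ℝ) ζ₀)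
        ∧ StrictAntiOn Hrate (Set.Ioo ζ₀ (1 : ℝ))
        ∧ ∀ ζ ∈ Set.Ioo (0 : ℝ) 1, ζ ≠ ζ₀ → Hrate ζ < Hrate ζ₀ := by
  intro ζ₀ hζ₀ hg
  have hζ₀1 : ζ₀ < 1 := hζ₀.2.trans sqrt_two_sub_sqrt_two_mem_Ioo.2
  have hcoef : ∀ x ∈ Ioo (0 : ℝ) 1, 0 < 2 * (x * (2 - x ^ 2) / √(1 - x ^ 2) ^ 3) := by
    intro x hx
    have := hx.1
    have : 0 < 2 - x ^ 2 := by nlinarith [hx.2]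
    have : 0 < √(1 - x ^ 2) := sqrt_pos.2 (by nlinarith [hx.2])
    positivity
  obtain ⟨hmono, hanti⟩ := strictMonoOn_Ioc_and_strictAntiOn_Ico_of_hasDerivAt ⟨hζ₀.1, hζ₀1⟩
    (fun x hx ↦ hasDerivAt_Hrate hx.1 hx.2)
    (fun x hx ↦ mul_pos (hcoef x ⟨hx.1, hx.2.trans hζ₀1⟩) (g0_pos_of_lt hζ₀.2.le hg hx))
    (fun x hx ↦ mul_neg_of_pos_of_neg (hcoef x ⟨hζ₀.1.trans hx.1, hx.2⟩) (g0_neg_of_gt hζ₀ hg hx))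
  refine ⟨hmono.mono Ioo_subset_Ioc_self, hanti.mono Ioo_subset_Ico_self, fun ζ hζ hne ↦ ?_⟩
  rcases hne.lt_or_gt with h | h
  · exact hmono ⟨hζ.1, h.le⟩ ⟨hζ₀.1, le_rfl⟩ h
  · exact hanti ⟨le_rfl, hζ₀1⟩ ⟨h.le, hζ.2⟩ h
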